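/- If a function f is statistically ward continuous on a subset E of a 2-normed space X, then f is sequentially continuous on E in the ordinary sense. -/

import Mathlib

/-!
Suppose `f (x n)` does not converge to `f x₀` in direction `z`. Then some subsequence `x ∘ φ`
keeps `f (x (φ j))` at 2-norm distance at least `ε` from `f x₀`. The interleaved sequence
`x (φ 0), x₀, x (φ 1), x₀, …` is quasi-Cauchy, hence statistically quasi-Cauchy, but under `f`
every other step of it has 2-norm at least `ε`, so the large steps have density at least `1/2`,
contradicting statistical ward continuity.
-/

open Filter

/-- A 2-normed space: a real linear space with dim > 1 together with a 2-norm. -/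
structure TwoNormedSpace (X : Type*) [AddCommGroup X] [Module ℝ X] : Type _ where
  toFun : X → X → ℝ
  one_lt_rank : 1 < Module.rank ℝ X
  eq_zero_iff : ∀ x y : X, toFun x y = 0 ↔ ¬ LinearIndependent ℝ ![x, y]
  symm : ∀ x y : X, toFun x y = toFun y x
  smul_left : ∀ (α : ℝ) (x y : X), toFun (α • x) y = |α| * toFun x y
  add_right : ∀ x y z : X, toFun x (y + z) ≤ toFun x y + toFun x z

variable {X : Type*} [AddCommGroup X] [Module ℝ X]

/-- A sequence is statistically quasi-Cauchy w.r.t. a 2-norm `N`. -/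
def StatQuasiCauchy (N : X → X → ℝ) (x : ℕ → X) : Prop :=
  ∀ ε > (0:ℝ), ∀ z : X, Tendsto
    (fun n => (((Finset.range n).filter (fun k => ε ≤ N (x (k+1) - x k) z)).card : ℝ) / n)
    atTop (nhds 0)

/-- A sequence statistically converges to `L` w.r.t. a 2-norm `N`. -/
def StatConv (N : X → X → ℝ) (x : ℕ → X) (L : X) : Prop :=
  ∀ ε > (0:ℝ), ∀ z : X, Tendsto
    (fun n => (((Finset.range n).filter (fun k => ε ≤ N (x k - L) z)).card : ℝ) / n)
    atTop (nhds 0)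

/-- A sequence converges to `L` w.r.t. a 2-norm `N`. -/
def ConvTo (N : X → X → ℝ) (x : ℕ → X) (L : X) : Prop :=
  ∀ z : X, Tendsto (fun n => N (x n - L) z) atTop (nhds 0)

/-- A sequence is quasi-Cauchy w.r.t. a 2-norm `N`. -/
def QuasiCauchy (N : X → X → ℝ) (x : ℕ → X) : Prop :=
  ∀ z : X, Tendsto (fun n => N (x (n+1) - x n) z) atTop (nhds 0)

/-- A subset `E` is statistically ward compact w.r.t. a 2-norm `N`. -/
def StatWardCompact (N : X → X → ℝ) (E : Set X) : Prop :=
  ∀ x : ℕ → X, (∀ n, x n ∈ E) → ∃ φ : ℕ → ℕ, StrictMono φ ∧ StatQuasiCauchy N (x ∘ φ)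

/-- `f` is statistically ward continuous on `E` w.r.t. a 2-norm `N`. -/
def StatWardContinuousOn (N : X → X → ℝ) (f : X → X) (E : Set X) : Prop :=
  ∀ x : ℕ → X, (∀ n, x n ∈ E) → StatQuasiCauchy N x → StatQuasiCauchy N (fun n => f (x n))

/-- The standard 2-norm on `ℝ²`: the area of the parallelogram spanned by `a` and `b`. -/
def N2 : ℝ × ℝ → ℝ × ℝ → ℝ := fun a b => |a.1 * b.2 - a.2 * b.1|

open Topology Finset

namespace TwoNormedSpace

variable (T : TwoNormedSpace X)

lemma map_neg_left (a b : X) : T.toFun (-a) b = T.toFun a b := by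
  simpa using T.smul_left (-1) a b

lemma map_sub_comm_left (a b c : X) : T.toFun (a - b) c = T.toFun (b - a) c := by
  rw [← T.map_neg_left, neg_sub]

lemma nonneg (a b : X) : 0 ≤ T.toFun a b := by
  have hzero : T.toFun a 0 = 0 := by
    rw [T.symm]
    simpa using T.smul_left 0 a a
  have htri := T.add_right a b (-b)
  rw [add_neg_cancel, hzero, T.symm a (-b), T.map_neg_left, T.symm] at htri
  rw [T.symm]
  linarith

end TwoNormedSpace

omit [Module ℝ X] in
lemma QuasiCauchy.statQuasiCauchy {N : X → X → ℝ} {x : ℕ → X} (h : QuasiCauchy N x) :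
    StatQuasiCauchy N x := by
  intro ε hε z
  obtain ⟨K, hK⟩ := (Metric.tendsto_atTop.mp (h z)) ε hε
  have hsub : ∀ n, (range n).filter (fun k => ε ≤ N (x (k + 1) - x k) z) ⊆ range K := by
    intro n k hk
    simp only [mem_filter, mem_range] at hk ⊢
    by_contra! hKk
    have hsmall := (abs_lt.mp (by simpa using hK k hKk)).2
    linarith [hk.2]
  refine squeeze_zero (fun n => by positivity) (fun n => ?_)
    (tendsto_const_div_atTop_nhds_zero_nat (K : ℝ))
  gcongr
  exact_mod_cast (card_le_card (hsub n)).trans_eq (card_range K)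

lemma exists_strictMono_forall_le_of_not_tendsto_zero {u : ℕ → ℝ} (hu : ∀ n, 0 ≤ u n)
    (h : ¬ Tendsto u atTop (𝓝 0)) :
    ∃ ε > 0, ∃ φ : ℕ → ℕ, StrictMono φ ∧ ∀ j, ε ≤ u (φ j) := by
  have hfreq : ∃ ε > 0, ∃ᶠ n in atTop, ε ≤ u n := by
    by_contra! H
    exact h (tendsto_order.2 ⟨fun a ha => Eventually.of_forall fun n => ha.trans_le (hu n),
      fun ε hε => H ε hε⟩)
  obtain ⟨ε, hε, hfreq⟩ := hfreq
  exact ⟨ε, hε, extraction_of_frequently_atTop hfreq⟩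

lemma not_tendsto_density_zero_of_forall_two_mul {p : ℕ → Prop} [DecidablePred p]
    (hp : ∀ j, p (2 * j)) :
    ¬ Tendsto (fun n => ((#((range n).filter p) : ℕ) : ℝ) / n) atTop (𝓝 0) := by
  intro h
  have hcard : ∀ m, m ≤ #((range (2 * m)).filter p) := by
    intro m
    have himage : (range m).image (2 * ·) ⊆ (range (2 * m)).filter p := by
      intro k hk
      obtain ⟨j, hj, rfl⟩ := mem_image.mp hk
      exact mem_filter.mpr ⟨mem_range.mpr (by have := mem_range.mp hj; omega), hp j⟩
    have hinj : Function.Injective (2 * · : ℕ → ℕ) := fun a b hab => by simpa using hab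
    simpa [card_image_of_injective _ hinj] using card_le_card himage
  have hhalf : ∀ m : ℕ, (1 : ℝ) / 2 ≤ ((#((range (2 * (m + 1))).filter p) : ℕ) : ℝ) /
      ((2 * (m + 1) : ℕ) : ℝ) := by
    intro m
    rw [le_div_iff₀ (by positivity)]
    have hm : ((m + 1 : ℕ) : ℝ) ≤ #((range (2 * (m + 1))).filter p) := by
      exact_mod_cast hcard (m + 1)
    push_cast at hm ⊢
    linarith
  have hsub : Tendsto (fun m : ℕ => 2 * (m + 1)) atTop atTop :=
    tendsto_atTop_atTop.mpr fun b => ⟨b, fun a ha => by omega⟩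
  linarith [ge_of_tendsto' (h.comp hsub) hhalf]

def interleave {α : Type*} (u : ℕ → α) (c : α) (n : ℕ) : α :=
  if Even n then u (n / 2) else c

section Interleave

variable {α : Type*} (u : ℕ → α) (c : α)

lemma interleave_two_mul (j : ℕ) : interleave u c (2 * j) = u j := by
  simp [interleave]

lemma interleave_two_mul_add_one (j : ℕ) : interleave u c (2 * j + 1) = c := by
  simp [interleave]

lemma interleave_mem {s : Set α} (hu : ∀ n, u n ∈ s) (hc : c ∈ s) (n : ℕ) :
    interleave u c n ∈ s := by
  unfold interleave
  split_ifs
  exacts [hu _, hc]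

end Interleave

lemma TwoNormedSpace.map_interleave_succ_sub (T : TwoNormedSpace X) (u : ℕ → X) (c w : X)
    (n : ℕ) :
    T.toFun (interleave u c (n + 1) - interleave u c n) w = T.toFun (u ((n + 1) / 2) - c) w := by
  obtain ⟨j, rfl | rfl⟩ := Nat.even_or_odd' n
  · rw [interleave_two_mul_add_one, interleave_two_mul, T.map_sub_comm_left]
    congr 3
    omega
  · rw [show 2 * j + 1 + 1 = 2 * (j + 1) by ring, interleave_two_mul, interleave_two_mul_add_one]
    congr 3
    omega

lemma ConvTo.quasiCauchy_interleave {T : TwoNormedSpace X} {u : ℕ → X} {c : X}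
    (h : ConvTo T.toFun u c) :
    QuasiCauchy T.toFun (interleave u c) := by
  intro w
  simp_rw [T.map_interleave_succ_sub]
  exact (h w).comp (tendsto_atTop_atTop.mpr fun b => ⟨2 * b, fun n hn => by omega⟩)

theorem stmt17 {X : Type*} [AddCommGroup X] [Module ℝ X] (T : TwoNormedSpace X)
    (E : Set X) (f : X → X) (hf : StatWardContinuousOn T.toFun f E) :
    ∀ x₀ ∈ E, ∀ x : ℕ → X, (∀ n, x n ∈ E) → ConvTo T.toFun x x₀ →
      ConvTo T.toFun (fun n => f (x n)) (f x₀) := by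
  intro x₀ hx₀ x hxE hconv z
  by_contra hdiv
  obtain ⟨ε, hε, φ, hφ, hfar⟩ :=
    exists_strictMono_forall_le_of_not_tendsto_zero (fun n => T.nonneg _ _) hdiv
  have hsub : ConvTo T.toFun (x ∘ φ) x₀ := fun w => (hconv w).comp hφ.tendsto_atTop
  have hstat := hf _ (interleave_mem _ _ (fun n => hxE (φ n)) hx₀)
    hsub.quasiCauchy_interleave.statQuasiCauchy ε hε z
  refine not_tendsto_density_zero_of_forall_two_mul (fun j => ?_) hstat
  dsimp only
  rw [interleave_two_mul_add_one, interleave_two_mul, T.map_sub_comm_left]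
  exact hfar j
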